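/- Let H be a graph on n vertices with δ(H) ≥ (2/3 − α')n where 0 < α' ≪ 1. Let V₁ ⊆ V(H) with |V₁| ≥ (2/3 − α')n − 1 and |V₁| ≡ n (mod 2), and set V₀ = V(H) − V₁ assumed nonempty. Then there exist two vertices of V₀ having a common neighbor in V₁. -/

import Mathlib

/-!
If no two vertices of `V₀` had a common neighbour in `V₁`, the neighbourhoods in `V₁` of the
`m = |V₀|` vertices of `V₀` would be disjoint, each of size at least `δ - (m - 1)`; hence
`m (δ - m + 1) ≤ |V₁| = n - m`. The parity condition makes `m` even, so `2 ≤ m`, while the bound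
on `|V₁|` gives `m ≤ n - δ + 1`. On this interval the concave function `m (δ - m + 2) - n` is
positive at both endpoints, a contradiction.
-/

open Finset

namespace SimpleGraph

variable {V : Type*} [Fintype V] (G : SimpleGraph V) [DecidableRel G.Adj]

theorem ncard_neighborSet_eq_degree (v : V) : (G.neighborSet v).ncard = G.degree v := by
  rw [Set.ncard_eq_toFinset_card', ← neighborFinset_def, card_neighborFinset_eq_degree]

variable [DecidableEq V]

theorem degree_le_card_neighborFinset_inter_compl_add {s : Finset V} {u : V} (hu : u ∈ s) :
    G.degree u ≤ #(G.neighborFinset u ∩ sᶜ) + (#s - 1) := by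
  have hsub : G.neighborFinset u ⊆ (G.neighborFinset u ∩ sᶜ) ∪ s.erase u := by
    intro w hw
    by_cases hws : w ∈ s
    · exact mem_union_right _
        (mem_erase.mpr ⟨(G.ne_of_adj ((G.mem_neighborFinset u w).mp hw)).symm, hws⟩)
    · exact mem_union_left _ (mem_inter.mpr ⟨hw, mem_compl.mpr hws⟩)
  calc G.degree u = #(G.neighborFinset u) := (G.card_neighborFinset_eq_degree u).symm
    _ ≤ #((G.neighborFinset u ∩ sᶜ) ∪ s.erase u) := card_le_card hsub
    _ ≤ #(G.neighborFinset u ∩ sᶜ) + #(s.erase u) := card_union_le _ _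
    _ = #(G.neighborFinset u ∩ sᶜ) + (#s - 1) := by rw [card_erase_of_mem hu]

theorem sum_card_neighborFinset_inter_le {s t : Finset V}
    (h : ∀ u ∈ s, ∀ v ∈ s, u ≠ v → ∀ w ∈ t, G.Adj u w → ¬G.Adj v w) :
    ∑ u ∈ s, #(G.neighborFinset u ∩ t) ≤ #t := by
  have hdisj : (s : Set V).PairwiseDisjoint fun u => G.neighborFinset u ∩ t := by
    intro u hu v hv huv
    rw [Function.onFun, Finset.disjoint_left]
    intro w hwu hwv
    rw [mem_inter, mem_neighborFinset] at hwu hwv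
    exact h u hu v hv huv w hwu.2 hwu.1 hwv.1
  rw [← card_biUnion hdisj]
  exact card_le_card (biUnion_subset.mpr fun _ _ => inter_subset_right)

theorem sum_degree_le_of_no_common_neighbor_compl {s : Finset V}
    (h : ∀ u ∈ s, ∀ v ∈ s, u ≠ v → ∀ w ∉ s, G.Adj u w → ¬G.Adj v w) :
    ∑ u ∈ s, G.degree u ≤ #sᶜ + #s * (#s - 1) :=
  calc ∑ u ∈ s, G.degree u ≤ ∑ u ∈ s, (#(G.neighborFinset u ∩ sᶜ) + (#s - 1)) :=
        sum_le_sum fun _ hu => G.degree_le_card_neighborFinset_inter_compl_add hu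
    _ = ∑ u ∈ s, #(G.neighborFinset u ∩ sᶜ) + #s * (#s - 1) := by
        rw [sum_add_distrib, sum_const, smul_eq_mul]
    _ ≤ #sᶜ + #s * (#s - 1) := by
        gcongr
        exact G.sum_card_neighborFinset_inter_le fun u hu v hv huv w hw => h u hu v hv huv w
          (mem_compl.mp hw)

end SimpleGraph

theorem add_mul_self_sub_two_mul_lt_mul {n α m : ℝ} (hα : 0 < α) (hsmall : 8 * α + 6 / n < 1 / 3)
    (hm2 : 2 ≤ m) (hm : m ≤ n - (2 / 3 - α) * n + 1) :
    n + m * m - 2 * m < m * ((2 / 3 - α) * n) := by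
  have hn : 0 < n := by nlinarith
  have hsmall' : 8 * α * n + 6 < n / 3 := by
    have := mul_lt_mul_of_pos_right hsmall hn
    rwa [add_mul, div_mul_cancel₀ _ hn.ne', one_div_mul_eq_div] at this
  nlinarith [mul_nonneg (sub_nonneg.mpr hm2) (sub_nonneg.mpr hm)]

/-- Let `H` be a graph on `n` vertices with `δ(H) ≥ (2/3 − α')n`, where `0 < α'` is small
(explicitly `8α' + 6/n < 1/3`).  Let `V₁ ⊆ V(H)` with `|V₁| ≥ (2/3 − α')n − 1` and
`|V₁| ≡ n (mod 2)`, and suppose `V₀ = V(H) − V₁` is nonempty.  Then there exist two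
distinct vertices of `V₀` having a common neighbor in `V₁`. -/
theorem stmt_8 {V : Type*} [Fintype V] (H : SimpleGraph V) (α' : ℝ)
    (hα : 0 < α')
    (hsmall : 8 * α' + 6 / (Fintype.card V : ℝ) < 1 / 3)
    (hδ : ∀ v : V, ((2 : ℝ) / 3 - α') * (Fintype.card V : ℝ) ≤ (H.neighborSet v).ncard)
    (V₁ : Set V)
    (hV₁ : ((2 : ℝ) / 3 - α') * (Fintype.card V : ℝ) - 1 ≤ (V₁.ncard : ℝ))
    (hpar : V₁.ncard % 2 = Fintype.card V % 2)
    (hV₀ : (V₁ᶜ : Set V).Nonempty) :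
    ∃ u v : V, u ∈ V₁ᶜ ∧ v ∈ V₁ᶜ ∧ u ≠ v ∧ ∃ w ∈ V₁, H.Adj u w ∧ H.Adj v w := by
  classical
  by_contra! hcon
  set V₀ : Finset V := (V₁ᶜ : Set V).toFinset
  have hsplit : V₁.ncard + #V₀ = Fintype.card V := by
    rw [← Set.ncard_eq_toFinset_card', Set.ncard_add_ncard_compl, Nat.card_eq_fintype_card]
  have hV₀pos : 0 < #V₀ := card_pos.mpr (Set.toFinset_nonempty.mpr hV₀)
  have hV₀two : 2 ≤ #V₀ := by omega -- `#V₀ = n - |V₁|` is even by `hpar`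
  have hV₀compl : #V₀ᶜ = V₁.ncard := by
    simp [V₀, Set.ncard_eq_toFinset_card']
  have hsum := H.sum_degree_le_of_no_common_neighbor_compl (s := V₀) fun u hu v hv huv w hw =>
    hcon u v (Set.mem_toFinset.mp hu) (Set.mem_toFinset.mp hv) huv w (by simpa [V₀] using hw)
  have hlower : (#V₀ : ℝ) * ((2 / 3 - α') * Fintype.card V) ≤ ∑ u ∈ V₀, (H.degree u : ℝ) := by
    simpa using card_nsmul_le_sum V₀ (fun u => (H.degree u : ℝ)) _
      fun u _ => (H.ncard_neighborSet_eq_degree u ▸ hδ u)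
  have hupper : ∑ u ∈ V₀, (H.degree u : ℝ) ≤ V₁.ncard + #V₀ * (#V₀ - 1) := by
    have := (Nat.cast_le (α := ℝ)).mpr (hV₀compl ▸ hsum)
    rwa [Nat.cast_add, Nat.cast_mul, Nat.cast_sub hV₀pos, Nat.cast_sum, Nat.cast_one] at this
  have hsplit_real : (V₁.ncard : ℝ) + #V₀ = Fintype.card V := by exact_mod_cast hsplit
  have hquad := add_mul_self_sub_two_mul_lt_mul (m := (#V₀ : ℝ)) hα hsmall
    (by exact_mod_cast hV₀two) (by linarith)
  linarith
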